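/- Under the same setup but with the roles reversed — z = y₁ in the closed first quadrant with Re y₁ > L (so n = (0,−1)) and the target point x = (x₁, x₂) real with |x₁| ≤ L − δ, |x₂| ≤ H — the kernel g(x, y) = −(ik/2) H₁⁽¹⁾(k r) · ((x₁ − y₁, x₂)·(0,−1)) / r, with r = √((x₁ − y₁)² + x₂²), satisfies |g(x,y)| ≤ C₂ · e^{−k|Im y₁|} / (1 + |y₁|)^{3/2} for a constant C₂ depending on L, δ, H, k. -/

import Mathlib

/-!
Write `ζ = y₁ - x₁`, so that `r = √(ζ² + x₂²)` with `Re ζ ≥ δ` and `Im ζ ≥ 0`.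
The half-angle identity `2 (Im r)² = |r²| - Re r²` and `|ζ² + x₂²| ≥ |ζ|² - x₂²`
give `Im r ≥ Im y₁ - H`, so the Hankel factor `e^{-k Im r}` is at most
`e^{kH} e^{-k Im y₁}`. Moreover `|ζ² + x₂²| ≥ (Re ζ)² ≥ δ²`, which makes `|r|`
comparable to `|ζ|` and hence to `1 + |y₁|`. As the numerator `x₂` stays
bounded by `H`, the kernel is `O(|r|^{-3/2} + |r|^{-2})` times that exponential.
-/

open Complex

noncomputable section

/-- The complexified distance `r = √((x₁ - y₁)² + x₂²)` (principal branch),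
for a real target `(x₁, x₂)` and a complexified source `(y₁, 0)`. -/
def complexDist' (x₁ x₂ : ℝ) (y₁ : ℂ) : ℂ :=
  (((x₁ : ℂ) - y₁) ^ 2 + (x₂ : ℂ) ^ 2) ^ ((1 : ℂ) / 2)

/-- The kernel `g(x,y) = -(ik/2) H₁⁽¹⁾(k r) ((x₁ - y₁, x₂) ⋅ (0,-1)) / r`
with a real target `(x₁, x₂)` and complexified source `(y₁, 0)`, whose normal
is `(0, -1)`. -/
def kernelG' (Hf : ℂ → ℂ) (k : ℝ) (x₁ x₂ : ℝ) (y₁ : ℂ) : ℂ :=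
  -(Complex.I * k / 2) * Hf (k * complexDist' x₁ x₂ y₁) *
    (-(x₂ : ℂ)) / complexDist' x₁ x₂ y₁

namespace Complex

lemma cpow_half_eq_cpow_ofReal (w : ℂ) : w ^ (1 / 2 : ℂ) = w ^ ((1 / 2 : ℝ) : ℂ) := by
  push_cast; rfl

lemma norm_cpow_half (w : ℂ) : ‖w ^ (1 / 2 : ℂ)‖ = √‖w‖ := by
  rw [cpow_half_eq_cpow_ofReal, norm_cpow_real, Real.sqrt_eq_rpow]

lemma cpow_half_sq (w : ℂ) : (w ^ (1 / 2 : ℂ)) ^ 2 = w := by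
  simp [cpow_ofNat_inv_pow]

lemma im_cpow_half_nonneg {w : ℂ} (hw : 0 ≤ w.im) : 0 ≤ (w ^ (1 / 2 : ℂ)).im := by
  rw [cpow_half_eq_cpow_ofReal, cpow_ofReal_im]
  have h0 := arg_nonneg_iff.2 hw
  have hπ := arg_le_pi w
  exact mul_nonneg (by positivity)
    (Real.sin_nonneg_of_nonneg_of_le_pi (by linarith) (by linarith))

lemma two_mul_im_cpow_half_sq (w : ℂ) : 2 * (w ^ (1 / 2 : ℂ)).im ^ 2 = ‖w‖ - w.re := by
  set r := w ^ (1 / 2 : ℂ)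
  have hnorm : ‖w‖ = r.re ^ 2 + r.im ^ 2 := by
    rw [← cpow_half_sq w, norm_pow, Complex.sq_norm, normSq_apply]; ring
  have hre : w.re = r.re ^ 2 - r.im ^ 2 := by
    rw [← cpow_half_sq w, sq, mul_re]; ring
  rw [hnorm, hre]; ring

lemma norm_sq_sub_sq_le_norm_sq_add_sq (ζ : ℂ) (s : ℝ) :
    ‖ζ‖ ^ 2 - s ^ 2 ≤ ‖ζ ^ 2 + (s : ℂ) ^ 2‖ := by
  have h := norm_sub_le (ζ ^ 2 + (s : ℂ) ^ 2) ((s : ℂ) ^ 2)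
  rw [add_sub_cancel_right, norm_pow, norm_pow, norm_real, Real.norm_eq_abs, sq_abs] at h
  linarith

lemma sq_re_le_norm_sq_add_sq (ζ : ℂ) (s : ℝ) : ζ.re ^ 2 ≤ ‖ζ ^ 2 + (s : ℂ) ^ 2‖ := by
  refine le_of_pow_le_pow_left₀ two_ne_zero (norm_nonneg _) ?_
  rw [Complex.sq_norm, normSq_apply]
  simp only [add_re, add_im, sq, mul_re, mul_im, ofReal_re, ofReal_im]
  nlinarith [sq_nonneg (ζ.im * ζ.im - s * s), mul_nonneg (mul_self_nonneg ζ.re)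
    (add_nonneg (mul_self_nonneg ζ.im) (mul_self_nonneg s))]

lemma im_sub_abs_le_im_cpow_half {ζ : ℂ} (hre : 0 ≤ ζ.re) (him : 0 ≤ ζ.im) (s : ℝ) :
    ζ.im - |s| ≤ ((ζ ^ 2 + (s : ℂ) ^ 2) ^ (1 / 2 : ℂ)).im := by
  set w := ζ ^ 2 + (s : ℂ) ^ 2
  have hw_re : w.re = ζ.re ^ 2 - ζ.im ^ 2 + s ^ 2 := by simp [w, sq]
  have hw_im : w.im = 2 * ζ.re * ζ.im := by simp [w, sq]; ring
  have hq : 0 ≤ (w ^ (1 / 2 : ℂ)).im := im_cpow_half_nonneg (by rw [hw_im]; positivity)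
  have hq2 : ζ.im ^ 2 - |s| ^ 2 ≤ (w ^ (1 / 2 : ℂ)).im ^ 2 := by
    have h_half := two_mul_im_cpow_half_sq w
    have h_norm := norm_sq_sub_sq_le_norm_sq_add_sq ζ s
    rw [Complex.sq_norm, normSq_apply] at h_norm
    rw [sq_abs]
    nlinarith
  nlinarith [abs_nonneg s]

lemma norm_le_mul_norm_cpow_half {δ H s : ℝ} {ζ : ℂ} (hδ : 0 ≤ δ) (hre : δ ≤ ζ.re)
    (hs : |s| ≤ H) : δ * ‖ζ‖ ≤ √(δ ^ 2 + H ^ 2) * ‖(ζ ^ 2 + (s : ℂ) ^ 2) ^ (1 / 2 : ℂ)‖ := by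
  rw [norm_cpow_half, ← Real.sqrt_mul (by positivity),
    Real.le_sqrt (by positivity) (by positivity)]
  have hs2 : s ^ 2 ≤ H ^ 2 := by rw [← sq_abs]; exact pow_le_pow_left₀ (abs_nonneg s) hs 2
  have h1 := norm_sq_sub_sq_le_norm_sq_add_sq ζ s
  have h2 : δ ^ 2 ≤ ‖ζ ^ 2 + (s : ℂ) ^ 2‖ :=
    (pow_le_pow_left₀ hδ hre 2).trans (sq_re_le_norm_sq_add_sq ζ s)
  nlinarith

end Complex

lemma one_add_norm_le_mul_norm_sub {E : Type*} [SeminormedAddCommGroup E] {x y : E} {δ L : ℝ}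
    (hδ : 0 < δ) (hx : ‖x‖ ≤ L) (hxy : δ ≤ ‖y - x‖) :
    1 + ‖y‖ ≤ (1 + (1 + L) / δ) * ‖y - x‖ := by
  have h1 := norm_sub_norm_le y x
  have h2 : 1 + L ≤ (1 + L) / δ * ‖y - x‖ := by
    rw [div_mul_eq_mul_div, le_div_iff₀ hδ]
    exact mul_le_mul_of_nonneg_left hxy (by linarith [norm_nonneg x])
  linarith

lemma inv_sqrt_add_inv_div_le {k N R s : ℝ} (hk : 0 < k) (hN : 0 < N) (hs : 1 ≤ s)
    (hsR : s ≤ N * R) :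
    (1 / √(k * R) + 1 / (k * R)) / R ≤
      (N ^ (3 / 2 : ℝ) / √k + N ^ 2 / k) / s ^ (3 / 2 : ℝ) := by
  have hR : 0 < R := pos_of_mul_pos_right (by linarith) hN.le
  have hs0 : 0 < s := by linarith
  have hsqrt : √(k * R) * R = √k * R ^ (3 / 2 : ℝ) := by
    rw [Real.sqrt_mul hk.le, Real.sqrt_eq_rpow R, mul_assoc, ← Real.rpow_add_one hR.ne']
    norm_num
  have h32 : s ^ (3 / 2 : ℝ) ≤ N ^ (3 / 2 : ℝ) * R ^ (3 / 2 : ℝ) := by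
    rw [← Real.mul_rpow hN.le hR.le]; gcongr
  have h2 : s ^ (3 / 2 : ℝ) ≤ N ^ 2 * R ^ 2 := by
    calc s ^ (3 / 2 : ℝ)
        ≤ s ^ (2 : ℝ) := Real.rpow_le_rpow_of_exponent_le hs (by norm_num)
      _ = s ^ 2 := Real.rpow_two s
      _ ≤ (N * R) ^ 2 := by gcongr
      _ = N ^ 2 * R ^ 2 := mul_pow N R 2
  rw [add_div, add_div, div_div, div_div, hsqrt]
  gcongr ?_ + ?_
  · rw [div_le_div_iff₀ (by positivity) (by positivity), one_mul]
    calc s ^ (3 / 2 : ℝ) ≤ N ^ (3 / 2 : ℝ) * R ^ (3 / 2 : ℝ) := h32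
      _ = N ^ (3 / 2 : ℝ) / √k * (√k * R ^ (3 / 2 : ℝ)) := by field_simp
  · rw [div_le_div_iff₀ (by positivity) (by positivity), one_mul]
    calc s ^ (3 / 2 : ℝ) ≤ N ^ 2 * R ^ 2 := h2
      _ = N ^ 2 / k * (k * R * R) := by field_simp

lemma complexDist'_eq (x₁ x₂ : ℝ) (y₁ : ℂ) :
    complexDist' x₁ x₂ y₁ = ((y₁ - x₁) ^ 2 + (x₂ : ℂ) ^ 2) ^ (1 / 2 : ℂ) := by
  rw [complexDist', sub_sq_comm]

lemma norm_kernelG' (Hf : ℂ → ℂ) (k x₁ x₂ : ℝ) (y₁ : ℂ) :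
    ‖kernelG' Hf k x₁ x₂ y₁‖ =
      |k| / 2 * ‖Hf (k * complexDist' x₁ x₂ y₁)‖ * |x₂| / ‖complexDist' x₁ x₂ y₁‖ := by
  simp [kernelG']

def HasHankelDecay (Hf : ℂ → ℂ) (C₀ : ℝ) : Prop :=
  ∀ w : ℂ, w ≠ 0 → ‖Hf w‖ ≤ C₀ * Real.exp (-w.im) * (1 / √‖w‖ + 1 / ‖w‖)

namespace HasHankelDecay

variable {Hf : ℂ → ℂ} {C₀ : ℝ}

lemma nonneg (h : HasHankelDecay Hf C₀) : 0 ≤ C₀ := by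
  have h1 := (norm_nonneg _).trans (h 1 one_ne_zero)
  norm_num at h1
  linarith

lemma norm_apply_ofReal_mul_le (h : HasHankelDecay Hf C₀) {k H b : ℝ} (hk : 0 < k) {r : ℂ}
    (hr : r ≠ 0) (him : b - H ≤ r.im) :
    ‖Hf (k * r)‖ ≤
      C₀ * (Real.exp (k * H) * Real.exp (-k * b)) * (1 / √(k * ‖r‖) + 1 / (k * ‖r‖)) := by
  have h1 := h (k * r) (mul_ne_zero (by exact_mod_cast hk.ne') hr)
  rw [norm_mul, norm_real, Real.norm_of_nonneg hk.le, mul_im, ofReal_re, ofReal_im, zero_mul,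
    add_zero] at h1
  refine h1.trans ?_
  gcongr
  · exact h.nonneg
  rw [← Real.exp_add]
  gcongr
  nlinarith

end HasHankelDecay

lemma im_sub_le_im_complexDist' {x₁ x₂ H : ℝ} {y₁ : ℂ} (hre : x₁ ≤ y₁.re) (him : 0 ≤ y₁.im)
    (hx₂ : |x₂| ≤ H) : y₁.im - H ≤ (complexDist' x₁ x₂ y₁).im := by
  have h := im_sub_abs_le_im_cpow_half (ζ := y₁ - x₁) (by simpa) (by simpa) x₂
  rw [complexDist'_eq]
  simp only [sub_im, ofReal_im, sub_zero] at h
  linarith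

lemma one_add_norm_le_mul_norm_complexDist' {x₁ x₂ δ L H : ℝ} {y₁ : ℂ} (hδ : 0 < δ)
    (hx₁ : |x₁| ≤ L) (hre : x₁ + δ ≤ y₁.re) (hx₂ : |x₂| ≤ H) :
    1 + ‖y₁‖ ≤ (1 + (1 + L) / δ) * (√(δ ^ 2 + H ^ 2) / δ) * ‖complexDist' x₁ x₂ y₁‖ := by
  have hζre : δ ≤ (y₁ - x₁).re := by simp only [sub_re, ofReal_re]; linarith
  have hL : 0 ≤ 1 + L := by linarith [abs_nonneg x₁]
  have h1 := one_add_norm_le_mul_norm_sub hδ (by simpa using hx₁) (hζre.trans (re_le_norm _))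
  have h2 := norm_le_mul_norm_cpow_half hδ.le hζre hx₂
  rw [complexDist'_eq]
  calc 1 + ‖y₁‖ ≤ (1 + (1 + L) / δ) * ‖y₁ - x₁‖ := h1
    _ ≤ (1 + (1 + L) / δ) *
          (√(δ ^ 2 + H ^ 2) / δ * ‖((y₁ - x₁) ^ 2 + (x₂ : ℂ) ^ 2) ^ (1 / 2 : ℂ)‖) := by
        gcongr
        rw [div_mul_eq_mul_div, le_div_iff₀ hδ]
        linarith
    _ = _ := by ring

/-- Kernel estimate for real targets in the perturbed (middle) part of the
boundary and complexified sources in the closed first quadrant beyond `L`. -/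
theorem kernel_bound_source_complex
    (k L δ H C₀ : ℝ) (hk : 0 < k) (hδ : 0 < δ) (hδL : δ < L) (hH : 0 < H)
    (Hf : ℂ → ℂ)
    (hHf : ∀ w : ℂ, w ≠ 0 →
      ‖Hf w‖ ≤ C₀ * Real.exp (-w.im) *
        (1 / Real.sqrt ‖w‖ + 1 / ‖w‖)) :
    ∃ C₂ : ℝ, 0 < C₂ ∧ ∀ (x₁ x₂ : ℝ) (y₁ : ℂ),
      L < y₁.re → 0 ≤ y₁.im → |x₁| ≤ L - δ → |x₂| ≤ H →
      ‖kernelG' Hf k x₁ x₂ y₁‖ ≤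
        C₂ * Real.exp (-k * |y₁.im|) / (1 + ‖y₁‖) ^ ((3 : ℝ) / 2) := by
  have hL : 0 < L := hδ.trans hδL
  set N := (1 + (1 + L) / δ) * (√(δ ^ 2 + H ^ 2) / δ)
  have hN : 0 < N := by positivity
  have hC₀ : 0 ≤ C₀ := HasHankelDecay.nonneg hHf
  set K := k / 2 * C₀ * Real.exp (k * H) * H * (N ^ (3 / 2 : ℝ) / √k + N ^ 2 / k)
  refine ⟨K + 1, by positivity, fun x₁ x₂ y₁ hre him hx₁ hx₂ ↦ ?_⟩
  have hx₁y₁ : x₁ + δ ≤ y₁.re := by linarith [le_abs_self x₁]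
  set r := complexDist' x₁ x₂ y₁
  have hr_norm : 1 + ‖y₁‖ ≤ N * ‖r‖ :=
    one_add_norm_le_mul_norm_complexDist' hδ (by linarith) hx₁y₁ hx₂
  have hr : 0 < ‖r‖ := pos_of_mul_pos_right (by linarith [norm_nonneg y₁]) hN.le
  have hHf_r := HasHankelDecay.norm_apply_ofReal_mul_le hHf hk (norm_pos_iff.1 hr)
    (im_sub_le_im_complexDist' (by linarith) him hx₂)
  rw [norm_kernelG', abs_of_pos hk, abs_of_nonneg him]
  calc k / 2 * ‖Hf (k * r)‖ * |x₂| / ‖r‖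
      ≤ k / 2 * (C₀ * (Real.exp (k * H) * Real.exp (-k * y₁.im)) *
          (1 / √(k * ‖r‖) + 1 / (k * ‖r‖))) * H / ‖r‖ := by gcongr
    _ = k / 2 * C₀ * Real.exp (k * H) * H * Real.exp (-k * y₁.im) *
          ((1 / √(k * ‖r‖) + 1 / (k * ‖r‖)) / ‖r‖) := by ring
    _ ≤ k / 2 * C₀ * Real.exp (k * H) * H * Real.exp (-k * y₁.im) *
          ((N ^ (3 / 2 : ℝ) / √k + N ^ 2 / k) / (1 + ‖y₁‖) ^ (3 / 2 : ℝ)) :=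
        mul_le_mul_of_nonneg_left
          (inv_sqrt_add_inv_div_le hk hN (by linarith [norm_nonneg y₁]) hr_norm) (by positivity)
    _ = K * Real.exp (-k * y₁.im) / (1 + ‖y₁‖) ^ (3 / 2 : ℝ) := by ring
    _ ≤ (K + 1) * Real.exp (-k * y₁.im) / (1 + ‖y₁‖) ^ (3 / 2 : ℝ) := by gcongr; linarith

end
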